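/- In the Gaussian Sinkhorn setting, the parameter triple (ι_θ, κ_θ, ς_θ) with ς_θ := σ̄^{1/2} r_θ σ̄^{1/2}, κ_θ := ς_θ τ^{-1} β, and ι_θ := m̄ - κ_θ m, where r_θ is the positive definite fixed point of Ricc_{ϖ_θ} with ϖ_θ^{-1} = γ_θ γ_θ' and γ_θ = σ̄^{1/2} τ^{-1} β σ^{1/2}, satisfies the marginal constraint κ_θ σ κ_θ' + ς_θ = σ̄ (i.e., the pushforward of ν_{m,σ} under the kernel with these parameters is ν_{m̄,σ̄}). -/

import Mathlib

/-!
Write `s = σbar^{1/2}`. Since `κ = s r s τ⁻¹ β` and `γ = s τ⁻¹ β σ^{1/2}`, we get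
`κ σ κᵀ = s r γ γᵀ r s = s r ϖ⁻¹ r s`, while `ς = s r s`; so the marginal constraint is
`s (r ϖ⁻¹ r + r) s = s s`, i.e. `r ϖ⁻¹ r + r = 1`. This is `ϖ⁻¹` times the Riccati equation
`r² + ϖ r = ϖ`, valid because `r` commutes with `ϖ`. The closed form solves it: with
`S = (ϖ + (ϖ/2)²)^{1/2}`, which commutes with `ϖ`, `(S - ϖ/2)² + ϖ (S - ϖ/2) = S² - (ϖ/2)² = ϖ`.
-/

open Matrix
open scoped Classical

/-- The principal symmetric positive semidefinite square root of a matrix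
(junk value `0` if the matrix is not positive semidefinite). -/
noncomputable def psqrt {d : ℕ} (A : Matrix (Fin d) (Fin d) ℝ) : Matrix (Fin d) (Fin d) ℝ :=
  if h : A.PosSemidef then
    (h.1.eigenvectorUnitary : Matrix (Fin d) (Fin d) ℝ) *
      diagonal ((↑) ∘ (√·) ∘ h.1.eigenvalues) *
      (star h.1.eigenvectorUnitary : Matrix (Fin d) (Fin d) ℝ)
  else 0

open scoped MatrixOrder

section psqrt

variable {d : ℕ} {A : Matrix (Fin d) (Fin d) ℝ}

lemma psqrt_eq_sqrt (h : A.PosSemidef) : psqrt A = CFC.sqrt A := by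
  rw [CFC.sqrt_eq_real_sqrt A h.nonneg, cfcₙ_eq_cfc (hf0 := by simp), h.1.cfc_eq,
    IsHermitian.cfc, Unitary.conjStarAlgAut_apply]
  exact dif_pos h

lemma psqrt_mul_self (h : A.PosSemidef) : psqrt A * psqrt A = A := by
  rw [psqrt_eq_sqrt h]
  exact CFC.sqrt_mul_sqrt_self A h.nonneg

lemma transpose_psqrt (A : Matrix (Fin d) (Fin d) ℝ) : (psqrt A)ᵀ = psqrt A := by
  by_cases h : A.PosSemidef
  · rw [psqrt_eq_sqrt h, ← conjTranspose_eq_transpose_of_trivial]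
    exact (CFC.sqrt_nonneg A).isSelfAdjoint
  · simp [psqrt, h]

lemma isUnit_psqrt (h : A.PosDef) : IsUnit (psqrt A) := by
  rw [psqrt_eq_sqrt h.posSemidef, CFC.isUnit_sqrt_iff A h.posSemidef.nonneg]
  exact h.isUnit

lemma Commute.psqrt_right {B : Matrix (Fin d) (Fin d) ℝ} (h : Commute A B) :
    Commute A (psqrt B) := by
  by_cases hB : B.PosSemidef
  · rw [psqrt_eq_sqrt hB, CFC.sqrt_eq_cfc]
    exact (h.symm.cfc_nnreal _).symm
  · simp [psqrt, hB]

end psqrt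

lemma Matrix.posDef_mul_transpose_of_isUnit {n : Type*} [Fintype n] [DecidableEq n]
    {A : Matrix n n ℝ} (hA : IsUnit A) : (A * Aᵀ).PosDef := by
  simpa using PosDef.mul_conjTranspose_self A (vecMul_injective_iff_isUnit.mpr hA)

/-- `r * r + w * r = w` is the fixed-point equation `r = (1 + (w + r)⁻¹)⁻¹` of `Ricc_w`,
cleared of inverses. -/
lemma riccati_of_commute_of_mul_self_eq {R : Type*} [Ring R] [Algebra ℝ R] {w S r : R}
    (hc : Commute w S) (hS : S * S = w + ((1/2 : ℝ) • w) * ((1/2 : ℝ) • w))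
    (hr : r = (-(1/2 : ℝ)) • w + S) : r * r + w * r = w := by
  have hSw : S * w = w * S := hc.eq.symm
  subst hr
  simp only [add_mul, mul_add, smul_mul_assoc, mul_smul_comm, smul_smul, hS, hSw]
  module

lemma Matrix.mul_inv_mul_add_eq_one_of_riccati {n α : Type*} [Fintype n] [DecidableEq n]
    [CommRing α] {r w : Matrix n n α} (hw : IsUnit w) (hc : Commute r w)
    (h : r * r + w * r = w) : r * w⁻¹ * r + r = 1 := by
  refine hw.mul_left_cancel ?_
  calc w * (r * w⁻¹ * r + r) = r * (w * w⁻¹) * r + w * r := by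
        rw [mul_add, ← mul_assoc, ← mul_assoc, ← hc.eq, mul_assoc r]
    _ = w * 1 := by
        rw [mul_nonsing_inv _ ((isUnit_iff_isUnit_det w).mp hw), mul_one, h, mul_one]

lemma commute_psqrt_riccati {d : ℕ} (ϖ : Matrix (Fin d) (Fin d) ℝ) :
    Commute ϖ (psqrt (ϖ + ((1/2 : ℝ) • ϖ) * ((1/2 : ℝ) • ϖ))) :=
  Commute.psqrt_right <| (Commute.refl ϖ).add_right <|
    ((Commute.refl ϖ).smul_right _).mul_right ((Commute.refl ϖ).smul_right _)

section riccatiRoot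

variable {d : ℕ} {ϖ r : Matrix (Fin d) (Fin d) ℝ}

lemma transpose_riccati_root (hϖ : ϖᵀ = ϖ)
    (hr : r = (-(1/2 : ℝ)) • ϖ + psqrt (ϖ + ((1/2 : ℝ) • ϖ) * ((1/2 : ℝ) • ϖ))) : rᵀ = r := by
  rw [hr, transpose_add, transpose_smul, hϖ, transpose_psqrt]

lemma riccati_root_mul_inv_mul_add (hϖ : ϖ.PosDef)
    (hr : r = (-(1/2 : ℝ)) • ϖ + psqrt (ϖ + ((1/2 : ℝ) • ϖ) * ((1/2 : ℝ) • ϖ))) :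
    r * ϖ⁻¹ * r + r = 1 := by
  have hsq : (ϖ + ((1/2 : ℝ) • ϖ) * ((1/2 : ℝ) • ϖ)).PosSemidef :=
    hϖ.posSemidef.add <| by
      simpa only [sq] using (hϖ.posSemidef.smul (by norm_num : (0 : ℝ) ≤ 1/2)).pow 2
  have hriccati : r * r + ϖ * r = ϖ :=
    riccati_of_commute_of_mul_self_eq (commute_psqrt_riccati ϖ) (psqrt_mul_self hsq) hr
  have hcomm : Commute r ϖ := by
    rw [hr]
    exact ((Commute.refl ϖ).smul_left _).add_left (commute_psqrt_riccati ϖ).symm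
  exact mul_inv_mul_add_eq_one_of_riccati hϖ.isUnit hcomm hriccati

end riccatiRoot

/-- In the Gaussian Sinkhorn setting, the Schrödinger bridge parameters
`ς_θ = σbar^{1/2} r_θ σbar^{1/2}`, `κ_θ = ς_θ τ⁻¹ β`, `ι_θ = mbar - κ_θ m` — where `r_θ` is the
positive definite fixed point of `Ricc_{ϖ_θ}` with `ϖ_θ⁻¹ = γ_θ γ_θᵀ`,
`γ_θ = σbar^{1/2} τ⁻¹ β σ^{1/2}`, given in closed form by
`r_θ = -ϖ_θ/2 + (ϖ_θ + (ϖ_θ/2)²)^{1/2}` — satisfy the marginal constraint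
`κ_θ σ κ_θᵀ + ς_θ = σbar` (i.e. the pushforward of `ν_{m,σ}` under the kernel
`x ↦ N(ι_θ + κ_θ x, ς_θ)` is `ν_{mbar,σbar}`). -/
theorem schrodinger_bridge_marginal_constraint {d : ℕ}
    (m mbar : Fin d → ℝ)
    (σ σbar τ β : Matrix (Fin d) (Fin d) ℝ)
    (hσ : σ.PosDef) (hσbar : σbar.PosDef) (hτ : τ.PosDef) (hβ : IsUnit β)
    (γ ϖ r ς κ : Matrix (Fin d) (Fin d) ℝ) (ι : Fin d → ℝ)
    (hγ : γ = psqrt σbar * τ⁻¹ * β * psqrt σ)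
    (hϖ : ϖ = (γ * γᵀ)⁻¹)
    (hr : r = (-(1/2 : ℝ)) • ϖ + psqrt (ϖ + ((1/2 : ℝ) • ϖ) * ((1/2 : ℝ) • ϖ)))
    (hς : ς = psqrt σbar * r * psqrt σbar)
    (hκ : κ = ς * τ⁻¹ * β)
    (hι : ι = mbar - κ.mulVec m) :
    ι + κ.mulVec m = mbar ∧ κ * σ * κᵀ + ς = σbar := by
  refine ⟨by rw [hι, sub_add_cancel], ?_⟩
  have hγγ : (γ * γᵀ).PosDef := posDef_mul_transpose_of_isUnit <|
    hγ ▸ (((isUnit_psqrt hσbar).mul hτ.inv.isUnit).mul hβ).mul (isUnit_psqrt hσ)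
  have hϖ_posDef : ϖ.PosDef := hϖ ▸ hγγ.inv
  have hϖ_inv : ϖ⁻¹ = γ * γᵀ := by
    rw [hϖ, nonsing_inv_nonsing_inv _ ((isUnit_iff_isUnit_det _).mp hγγ.isUnit)]
  have hrT : rᵀ = r := transpose_riccati_root hϖ_posDef.isHermitian.eq hr
  have hτT : τᵀ = τ := hτ.isHermitian.eq
  calc κ * σ * κᵀ + ς = psqrt σbar * (r * ϖ⁻¹ * r + r) * psqrt σbar := by
        rw [← psqrt_mul_self hσ.posSemidef, hϖ_inv, hκ, hς, hγ]
        simp only [transpose_mul, transpose_psqrt, hrT, transpose_nonsing_inv, hτT, mul_add,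
          add_mul, mul_assoc]
    _ = σbar := by
        rw [riccati_root_mul_inv_mul_add hϖ_posDef hr, mul_one, psqrt_mul_self hσbar.posSemidef]
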